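/- For every A ⊆ Σ and every healthy set T of availability traces, the set hide_A(T) is healthy. -/
import Mathlib


/-- An availability action over the alphabet `E`: `Sum.inl a` is an ordinary event `a ∈ Σ`,
and `Sum.inr a` is the offer `◎a` of the event `a ∈ Σ`. -/
abbrev Act (E : Type*) := E ⊕ E

variable {E : Type*}

/-- A set `T` of availability traces is healthy (a member of the Availability Traces Model):
(1) nonempty and prefix-closed; (2) offers can be duplicated or removed; (3) an offered
event can be performed; (4) a performed event can first be offered. -/
def Healthy (T : Set (List (Act E))) : Prop :=
  T.Nonempty ∧
  (∀ s t : List (Act E), s ++ t ∈ T → s ∈ T) ∧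
  (∀ (tr : List (Act E)) (a : E) (tr' : List (Act E)),
    tr ++ [Sum.inr a] ++ tr' ∈ T →
      tr ++ [Sum.inr a, Sum.inr a] ++ tr' ∈ T ∧ tr ++ tr' ∈ T) ∧
  (∀ (tr : List (Act E)) (a : E), tr ++ [Sum.inr a] ∈ T → tr ++ [Sum.inl a] ∈ T) ∧
  (∀ (tr : List (Act E)) (a : E) (tr' : List (Act E)),
    tr ++ [Sum.inl a] ++ tr' ∈ T → tr ++ [Sum.inr a, Sum.inl a] ++ tr' ∈ T)

open Classical in
/-- `hideTr A tr` is `tr \ A`: the trace `tr` with all ordinary events belonging to `A`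
removed. -/
noncomputable def hideTr (A : Set E) : List (Act E) → List (Act E)
  | [] => []
  | Sum.inl a :: tr => if a ∈ A then hideTr A tr else Sum.inl a :: hideTr A tr
  | Sum.inr a :: tr => Sum.inr a :: hideTr A tr

/-- The semantics of hiding: offers of hidden events are blocked and hidden events are
removed from the trace. -/
noncomputable def hideOp (A : Set E) (T : Set (List (Act E))) : Set (List (Act E)) :=
  {u | ∃ tr ∈ T, (∀ a ∈ A, (Sum.inr a : Act E) ∉ tr) ∧ u = hideTr A tr}

lemma hideTr_append (A : Set E) (s t : List (Act E)) :
    hideTr A (s ++ t) = hideTr A s ++ hideTr A t := by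
  induction s with
  | nil => simp [hideTr]
  | cons x s ih =>
    cases x with
    | inl a => by_cases h : a ∈ A <;> simp [hideTr, h, ih]
    | inr a => simp [hideTr, ih]

lemma inr_mem_hideTr (A : Set E) (b : E) (w : List (Act E)) :
    (Sum.inr b : Act E) ∈ hideTr A w ↔ (Sum.inr b : Act E) ∈ w := by
  induction w with
  | nil => simp [hideTr]
  | cons x w ih =>
    cases x with
    | inl a =>
      by_cases h : a ∈ A <;> simp [hideTr, h, ih]
    | inr a => simp [hideTr, ih]

lemma hideTr_split (A : Set E) (w : List (Act E)) :
    ∀ s t : List (Act E), hideTr A w = s ++ t →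
      ∃ u v, w = u ++ v ∧ hideTr A u = s ∧ hideTr A v = t := by
  induction w with
  | nil =>
    intro s t h
    simp [hideTr] at h
    exact ⟨[], [], by simp, by simp [hideTr, h.1.symm], by simp [hideTr, h.2.symm]⟩
  | cons x w ih =>
    intro s t h
    cases s with
    | nil =>
      exact ⟨[], x :: w, by simp, rfl, by simpa using h⟩
    | cons y s =>
      cases x with
      | inl a =>
        by_cases ha : a ∈ A
        · simp only [hideTr, if_pos ha] at h
          obtain ⟨u, v, h1, h2, h3⟩ := ih (y :: s) t h
          exact ⟨Sum.inl a :: u, v, by simp [h1], by simp [hideTr, ha, h2], h3⟩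
        · simp only [hideTr, if_neg ha, List.cons_append, List.cons.injEq] at h
          obtain ⟨u, v, h1, h2, h3⟩ := ih s t h.2
          exact ⟨Sum.inl a :: u, v, by simp [h1], by simp [hideTr, ha, h2, h.1.symm], h3⟩
      | inr a =>
        simp only [hideTr, List.cons_append, List.cons.injEq] at h
        obtain ⟨u, v, h1, h2, h3⟩ := ih s t h.2
        exact ⟨Sum.inr a :: u, v, by simp [h1], by simp [hideTr, h2, h.1.symm], h3⟩

lemma hideTr_cons (A : Set E) (w : List (Act E)) :
    ∀ (x : Act E) (t : List (Act E)), hideTr A w = x :: t →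
      ∃ u v, w = u ++ x :: v ∧ hideTr A u = [] ∧ hideTr A v = t := by
  induction w with
  | nil => intro x t h; simp [hideTr] at h
  | cons y w ih =>
    intro x t h
    cases y with
    | inl a =>
      by_cases ha : a ∈ A
      · simp only [hideTr, if_pos ha] at h
        obtain ⟨u, v, h1, h2, h3⟩ := ih x t h
        exact ⟨Sum.inl a :: u, v, by simp [h1], by simp [hideTr, ha, h2], h3⟩
      · simp only [hideTr, if_neg ha, List.cons.injEq] at h
        exact ⟨[], w, by simp [h.1.symm], rfl, h.2⟩
    | inr a =>
      simp only [hideTr, List.cons.injEq] at h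
      exact ⟨[], w, by simp [h.1.symm], rfl, h.2⟩

lemma hideTr_eq_nil_no_inr (A : Set E) {w : List (Act E)} (h : hideTr A w = [])
    (b : E) : (Sum.inr b : Act E) ∉ w := by
  intro hb
  rw [← inr_mem_hideTr A b w] at hb
  simp [h] at hb

lemma inl_mem_hideTr (A : Set E) (a : E) (w : List (Act E))
    (h : (Sum.inl a : Act E) ∈ hideTr A w) : a ∉ A := by
  induction w with
  | nil => simp [hideTr] at h
  | cons x w ih =>
    cases x with
    | inl b =>
      by_cases hb : b ∈ A
      · exact ih (by simpa [hideTr, hb] using h)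
      · simp only [hideTr, if_neg hb, List.mem_cons] at h
        rcases h with h | h
        · exact (Sum.inl.inj h) ▸ hb
        · exact ih h
    | inr b =>
      simp only [hideTr, List.mem_cons] at h
      rcases h with h | h
      · simp at h
      · exact ih h

/-- Hiding preserves healthiness. -/
theorem hideOp_healthy {E : Type*} (A : Set E) (T : Set (List (Act E)))
    (hT : Healthy T) : Healthy (hideOp A T) := by
  obtain ⟨⟨w0, hw0⟩, hpre, hoff, hperf, hpo⟩ := hT
  refine ⟨⟨[], [], ?_, by simp, by simp [hideTr]⟩, ?_, ?_, ?_, ?_⟩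
  · exact hpre [] w0 (by simpa using hw0)
  · -- prefix closed
    rintro s t ⟨w, hw, hno, heq⟩
    obtain ⟨u, v, rfl, hu, hv⟩ := hideTr_split A w s t heq.symm
    exact ⟨u, hpre u v hw, fun a ha hmem => hno a ha (by simp [hmem]), hu.symm⟩
  · -- offer duplication/removal
    rintro tr a tr' ⟨w, hw, hno, heq⟩
    obtain ⟨w1, w2, rfl, h1, h2⟩ := hideTr_split A w tr ([Sum.inr a] ++ tr')
      (heq.symm.trans (List.append_assoc _ _ _))
    obtain ⟨u, v, rfl, hu, hv⟩ := hideTr_cons A w2 (Sum.inr a) tr' h2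
    have ha : a ∉ A := fun h => hno a h (by simp)
    have hwT : (w1 ++ u) ++ [Sum.inr a] ++ v ∈ T := by simpa using hw
    obtain ⟨hd, hr⟩ := hoff (w1 ++ u) a v hwT
    constructor
    · refine ⟨(w1 ++ u) ++ [Sum.inr a, Sum.inr a] ++ v, hd, ?_, ?_⟩
      · intro b hb hmem
        have hba : ¬ b = a := fun h => ha (h ▸ hb)
        refine hno b hb ?_
        simp only [List.mem_append, List.mem_cons, List.mem_singleton,
          List.not_mem_nil, Sum.inr.injEq, or_false, false_or] at hmem ⊢
        tauto
      · simp [hideTr_append, h1, hu, hv, hideTr]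
    · refine ⟨(w1 ++ u) ++ v, hr, ?_, ?_⟩
      · intro b hb hmem
        refine hno b hb ?_
        simp only [List.mem_append, List.mem_cons] at hmem ⊢
        tauto
      · simp [hideTr_append, h1, hu, hv]
  · -- performed offered event
    rintro tr a ⟨w, hw, hno, heq⟩
    obtain ⟨w1, w2, rfl, h1, h2⟩ := hideTr_split A w tr [Sum.inr a] heq.symm
    obtain ⟨u, v, rfl, hu, hv⟩ := hideTr_cons A w2 (Sum.inr a) [] h2
    have ha : a ∉ A := fun h => hno a h (by simp)
    have hwT : (w1 ++ u) ++ [Sum.inr a] ∈ T := by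
      refine hpre ((w1 ++ u) ++ [Sum.inr a]) v ?_
      simpa using hw
    have hT2 := hperf (w1 ++ u) a hwT
    refine ⟨(w1 ++ u) ++ [Sum.inl a], hT2, ?_, ?_⟩
    · intro b hb hmem
      refine hno b hb ?_
      simp only [List.mem_append, List.mem_cons, List.mem_singleton,
        List.not_mem_nil, reduceCtorEq, or_false, false_or] at hmem ⊢
      tauto
    · simp [hideTr_append, h1, hu, hideTr, ha]
  · -- performed event can be offered first
    rintro tr a tr' ⟨w, hw, hno, heq⟩
    obtain ⟨w1, w2, rfl, h1, h2⟩ := hideTr_split A w tr ([Sum.inl a] ++ tr')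
      (heq.symm.trans (List.append_assoc _ _ _))
    obtain ⟨u, v, rfl, hu, hv⟩ := hideTr_cons A w2 (Sum.inl a) tr' h2
    have ha : a ∉ A := inl_mem_hideTr A a _ (by rw [← heq]; simp)
    have hwT : (w1 ++ u) ++ [Sum.inl a] ++ v ∈ T := by simpa using hw
    have hT2 := hpo (w1 ++ u) a v hwT
    refine ⟨(w1 ++ u) ++ [Sum.inr a, Sum.inl a] ++ v, hT2, ?_, ?_⟩
    · intro b hb hmem
      have hba : ¬ b = a := fun h => ha (h ▸ hb)
      refine hno b hb ?_
      simp only [List.mem_append, List.mem_cons, List.mem_singleton,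
        List.not_mem_nil, Sum.inr.injEq, reduceCtorEq, or_false, false_or] at hmem ⊢
      tauto
    · simp [hideTr_append, h1, hu, hv, hideTr, ha]
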